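/- Let S ⊆ ℝ^d be a connected open set with 0 < Leb(S) < ∞, and let k(x,y) = λ φ(x − y) where λ > 0 and φ: ℝ^d → [0,∞) is strictly positive on an open ball B(0, 2δ) for some δ > 0. Then k is irreducible: for every measurable A ⊆ S with k = 0 almost everywhere on A × (S \ A), either Leb(A) = 0 or Leb(S \ A) = 0. -/

import Mathlib

/-!
Suppose both `A` and `S \ A` have positive measure. The supports of Lebesgue measure restricted
to `A` and to `S \ A` are closed, cover the open set `S` and both meet it, so by connectedness
they share a point `z`. Every ball around `z` then meets both `A` and `S \ A` in positive measure,
so `A × (S \ A)` has positive measure on the pairs at distance `< 2δ`, where `k > 0`.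
-/

open MeasureTheory Measure Metric Set

namespace MeasureTheory.Measure

section Topological

variable {X : Type*} [TopologicalSpace X] [MeasurableSpace X] [OpensMeasurableSpace X]
  {μ : Measure X}

theorem _root_.IsOpen.subset_support_restrict_union_support_restrict_diff
    [μ.IsOpenPosMeasure] {S : Set X} (hS : IsOpen S) (A : Set X) :
    S ⊆ (μ.restrict A).support ∪ (μ.restrict (S \ A)).support := by
  intro x hx
  have hxS : x ∈ (μ.restrict S).support :=
    interior_inter_support ⟨hS.interior_eq.symm ▸ hx, by simp [support_eq_univ]⟩
  rw [← support_add]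
  refine support_mono ?_ hxS
  calc μ.restrict S ≤ μ.restrict (A ∪ (S \ A)) :=
        restrict_mono (subset_union_right.trans union_sdiff_self.superset) le_rfl
    _ ≤ μ.restrict A + μ.restrict (S \ A) := restrict_union_le _ _

theorem _root_.IsPreconnected.exists_mem_support_restrict_and_support_restrict_diff
    [HereditarilyLindelofSpace X] [μ.IsOpenPosMeasure] {S A : Set X} (hSc : IsPreconnected S)
    (hSo : IsOpen S) (hAS : A ⊆ S) (hA : μ A ≠ 0) (hSA : μ (S \ A) ≠ 0) :
    ∃ z, z ∈ (μ.restrict A).support ∧ z ∈ (μ.restrict (S \ A)).support := by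
  have hA_pos : 0 < μ.restrict A S := by
    rwa [restrict_apply hSo.measurableSet, inter_eq_right.2 hAS, pos_iff_ne_zero]
  have hSA_pos : 0 < μ.restrict (S \ A) S := by
    rwa [restrict_apply hSo.measurableSet, inter_eq_right.2 sdiff_subset, pos_iff_ne_zero]
  obtain ⟨z, -, hzA, hzSA⟩ := isPreconnected_closed_iff.1 hSc _ _ isClosed_support
    isClosed_support (hSo.subset_support_restrict_union_support_restrict_diff A)
    (nonempty_inter_support_of_pos hA_pos) (nonempty_inter_support_of_pos hSA_pos)
  exact ⟨z, hzA, hzSA⟩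

end Topological

section Metric

variable {X : Type*} [PseudoMetricSpace X] [MeasurableSpace X] [OpensMeasurableSpace X]

theorem measure_ball_inter_pos_of_mem_support_restrict {μ : Measure X} {A : Set X} {z : X}
    (hz : z ∈ (μ.restrict A).support) {r : ℝ} (hr : 0 < r) : 0 < μ (ball z r ∩ A) := by
  rw [← restrict_apply measurableSet_ball]
  exact (mem_support_iff_forall z).1 hz _ (ball_mem_nhds z hr)

theorem prod_inter_dist_lt_pos_of_mem_support_restrict {μ ν : Measure X} [SFinite ν]
    {A B : Set X} {z : X} (hzA : z ∈ (μ.restrict A).support) (hzB : z ∈ (ν.restrict B).support)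
    {r : ℝ} (hr : 0 < r) :
    0 < μ.prod ν ((A ×ˢ B) ∩ {p | dist p.1 p.2 < r}) := by
  have hsub : (ball z (r / 2) ∩ A) ×ˢ (ball z (r / 2) ∩ B) ⊆
      (A ×ˢ B) ∩ {p | dist p.1 p.2 < r} := by
    rintro ⟨a, b⟩ ⟨⟨ha, haA⟩, hb, hbB⟩
    refine ⟨⟨haA, hbB⟩, ?_⟩
    have := dist_triangle_right a b z
    rw [mem_ball] at ha hb
    show dist a b < r
    linarith
  calc 0 < μ (ball z (r / 2) ∩ A) * ν (ball z (r / 2) ∩ B) :=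
        ENNReal.mul_pos (measure_ball_inter_pos_of_mem_support_restrict hzA (half_pos hr)).ne'
          (measure_ball_inter_pos_of_mem_support_restrict hzB (half_pos hr)).ne'
    _ = μ.prod ν ((ball z (r / 2) ∩ A) ×ˢ (ball z (r / 2) ∩ B)) := (prod_prod _ _).symm
    _ ≤ _ := measure_mono hsub

end Metric

end MeasureTheory.Measure

theorem kernel_irreducible_general (d : ℕ) (S : Set (EuclideanSpace ℝ (Fin d)))
    (hScon : IsConnected S) (hSopen : IsOpen S)
    (lam : ℝ) (hlam : 0 < lam) (δ : ℝ) (hδ : 0 < δ)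
    (φ : EuclideanSpace ℝ (Fin d) → ℝ)
    (hφpos : ∀ x, ‖x‖ < 2 * δ → 0 < φ x)
    (k : EuclideanSpace ℝ (Fin d) → EuclideanSpace ℝ (Fin d) → ℝ)
    (hk : ∀ x y, k x y = lam * φ (x - y))
    (A : Set (EuclideanSpace ℝ (Fin d))) (hAS : A ⊆ S)
    (hzero : (volume.prod volume) {p : EuclideanSpace ℝ (Fin d) × EuclideanSpace ℝ (Fin d) |
      p ∈ A ×ˢ (S \ A) ∧ k p.1 p.2 ≠ 0} = 0) :
    volume A = 0 ∨ volume (S \ A) = 0 := by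
  by_contra! h
  obtain ⟨z, hzA, hzSA⟩ :=
    hScon.isPreconnected.exists_mem_support_restrict_and_support_restrict_diff hSopen hAS h.1 h.2
  have hnear : (A ×ˢ (S \ A)) ∩ {p | dist p.1 p.2 < 2 * δ} ⊆
      {p | p ∈ A ×ˢ (S \ A) ∧ k p.1 p.2 ≠ 0} := by
    rintro ⟨x, y⟩ ⟨hxy, hdist⟩
    refine ⟨hxy, ?_⟩
    rw [hk]
    exact (mul_pos hlam (hφpos _ (by rwa [← dist_eq_norm]))).ne'
  exact (prod_inter_dist_lt_pos_of_mem_support_restrict hzA hzSA (by positivity)).ne'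
    (measure_mono_null hnear hzero)

/-- Let `S ⊆ ℝ^d` be a connected open set with `0 < Leb(S) < ∞`, and `k(x,y) = λ φ(x-y)`
with `λ > 0` and `φ ≥ 0` strictly positive on the ball `B(0, 2δ)`. Then `k` is irreducible:
if `A ⊆ S` is measurable and `k = 0` a.e. on `A × (S \ A)`, then `Leb(A) = 0` or
`Leb(S \ A) = 0`. -/
theorem kernel_irreducible (d : ℕ) (S : Set (EuclideanSpace ℝ (Fin d)))
    (hScon : IsConnected S) (hSopen : IsOpen S)
    (hS0 : 0 < volume S) (hSfin : volume S < ⊤)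
    (lam : ℝ) (hlam : 0 < lam) (δ : ℝ) (hδ : 0 < δ)
    (φ : EuclideanSpace ℝ (Fin d) → ℝ) (hφmeas : Measurable φ) (hφ0 : ∀ x, 0 ≤ φ x)
    (hφpos : ∀ x, ‖x‖ < 2 * δ → 0 < φ x)
    (k : EuclideanSpace ℝ (Fin d) → EuclideanSpace ℝ (Fin d) → ℝ)
    (hk : ∀ x y, k x y = lam * φ (x - y))
    (A : Set (EuclideanSpace ℝ (Fin d))) (hA : MeasurableSet A) (hAS : A ⊆ S)
    (hzero : (volume.prod volume) {p : EuclideanSpace ℝ (Fin d) × EuclideanSpace ℝ (Fin d) |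
      p ∈ A ×ˢ (S \ A) ∧ k p.1 p.2 ≠ 0} = 0) :
    volume A = 0 ∨ volume (S \ A) = 0 :=
  kernel_irreducible_general d S hScon hSopen lam hlam δ hδ φ hφpos k hk A hAS hzero
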